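/- Let n be a prime number and Ω = {0, 1, ..., m̄, n−m̄, ..., n−1} for some m̄ ∈ {1, ..., (n−3)/2}, so |Ω| = 2m̄ + 1. If s is a positive integer with s < n / (2(n − |Ω|)), then every s-sparse real vector x̄ ∈ ℝⁿ is the unique solution of min ‖x‖₁ subject to F_Ω x = F_Ω x̄ over real x ∈ ℝⁿ. -/

import Mathlib

/-- The ℓ₁ norm of a vector in ℝⁿ. -/
noncomputable def l1 {n : ℕ} (x : Fin n → ℝ) : ℝ := ∑ i, |x i|

/-- The support of a vector, as a finite index set. -/
noncomputable def suppF {n : ℕ} (x : Fin n → ℝ) : Finset (Fin n) :=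
  Finset.univ.filter (fun i => x i ≠ 0)

/-- `ξ = e^{-2πi/n}`, the primitive `n`-th root of unity used in the DFT. -/
noncomputable def dftXi (n : ℕ) : ℂ :=
  Complex.exp (-2 * (Real.pi : ℂ) * Complex.I / (n : ℂ))

/-- The `n × n` DFT matrix, `[F_n]_{k,l} = (1/√n) ξ^{kl}`. -/
noncomputable def Fdft (n : ℕ) : Matrix (Fin n) (Fin n) ℂ :=
  Matrix.of fun k l => ((Real.sqrt n : ℝ) : ℂ)⁻¹ * dftXi n ^ ((k : ℕ) * (l : ℕ))

/-- The partial DFT matrix `F_Ω`: the rows of `F_n` indexed by `Ω` (in increasing order). -/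
noncomputable def FdftRows (n : ℕ) (Ω : Finset (Fin n)) :
    Matrix (Fin Ω.card) (Fin n) ℂ :=
  Matrix.of fun a l => Fdft n (Ω.orderEmbOfFin rfl a) l

/-! The DFT matrix is unitary and all its entries have modulus `1/√n`. If `h = x - x̄` is
annihilated by `F_Ω`, Fourier inversion writes each `h i` as a sum of only `n - |Ω|` terms, each
of modulus at most `‖h‖₁ / n`, so `|h i| ≤ (n - |Ω|)/n · ‖h‖₁`. Summing over the support `S` of
`x̄` gives `2 ∑_{i ∈ S} |h i| < ‖h‖₁` (the null space property), and then
`‖x‖₁ ≥ ‖x̄‖₁ + ‖h‖₁ - 2 ∑_{i ∈ S} |h i| > ‖x̄‖₁`. -/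

open Complex Finset Matrix

section DFT

variable {n : ℕ}

lemma dftXi_isPrimitiveRoot (hn : n ≠ 0) : IsPrimitiveRoot (dftXi n) n := by
  have : dftXi n = (exp (2 * Real.pi * I / n))⁻¹ := by rw [← Complex.exp_neg, dftXi]; ring_nf
  rw [this]
  exact (isPrimitiveRoot_exp n hn).inv

lemma norm_dftXi_pow (hn : n ≠ 0) (m : ℕ) : ‖dftXi n ^ m‖ = 1 := by
  rw [norm_pow, (dftXi_isPrimitiveRoot hn).norm'_eq_one hn, one_pow]

lemma norm_Fdft_apply (hn : n ≠ 0) (k l : Fin n) : ‖Fdft n k l‖ = (√n)⁻¹ := by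
  simp [Fdft, norm_dftXi_pow hn]

lemma star_Fdft_mul_Fdft (hn : n ≠ 0) (k i j : Fin n) :
    star (Fdft n k i) * Fdft n k j =
      (n : ℂ)⁻¹ * (dftXi n ^ (j : ℕ) / dftXi n ^ (i : ℕ)) ^ (k : ℕ) := by
  have hsq : ((√n : ℝ) : ℂ) * ((√n : ℝ) : ℂ) = n := by
    rw [← ofReal_mul, Real.mul_self_sqrt n.cast_nonneg, ofReal_natCast]
  rw [star_def, Fdft, of_apply, of_apply, map_mul, ← inv_eq_conj (norm_dftXi_pow hn _),
    map_inv₀, conj_ofReal, div_pow, ← pow_mul, ← pow_mul, ← hsq]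
  ring_nf

theorem Fdft_conjTranspose_mul_self (hn : n ≠ 0) : (Fdft n)ᴴ * Fdft n = 1 := by
  have hξ := dftXi_isPrimitiveRoot hn
  have hpow : ∀ m : ℕ, (dftXi n ^ m) ^ n = 1 := fun m => by
    rw [← pow_mul, mul_comm, pow_mul, hξ.pow_eq_one, one_pow]
  ext i j
  simp only [mul_apply, conjTranspose_apply, star_Fdft_mul_Fdft hn, ← mul_sum]
  rw [Fin.sum_univ_eq_sum_range (fun k => (dftXi n ^ (j : ℕ) / dftXi n ^ (i : ℕ)) ^ k)]
  by_cases hij : i = j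
  · subst hij
    simp [div_self (pow_ne_zero _ (hξ.ne_zero hn)), hn]
  · have hw : dftXi n ^ (j : ℕ) / dftXi n ^ (i : ℕ) ≠ 1 := fun h => hij <| Fin.ext <|
      (hξ.pow_inj j.isLt i.isLt ((div_eq_one_iff_eq (pow_ne_zero _ (hξ.ne_zero hn))).1 h)).symm
    rw [geom_sum_eq hw, div_pow, hpow, hpow, div_one, sub_self, zero_div, mul_zero,
      Matrix.one_apply_ne hij]

lemma FdftRows_mulVec_apply (Ω : Finset (Fin n)) (v : Fin n → ℂ) (a : Fin Ω.card) :
    (FdftRows n Ω *ᵥ v) a = (Fdft n *ᵥ v) (Ω.orderEmbOfFin rfl a) :=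
  rfl

lemma Fdft_mulVec_sub_eq_zero_of_mem {Ω : Finset (Fin n)} {u v : Fin n → ℂ}
    (h : FdftRows n Ω *ᵥ u = FdftRows n Ω *ᵥ v) :
    ∀ k ∈ Ω, (Fdft n *ᵥ (u - v)) k = 0 := by
  intro k hk
  obtain ⟨a, rfl⟩ : k ∈ Set.range (Ω.orderEmbOfFin rfl) := by
    rw [range_orderEmbOfFin]; exact hk
  rw [mulVec_sub, Pi.sub_apply, ← FdftRows_mulVec_apply, ← FdftRows_mulVec_apply, h, sub_self]

end DFT

theorem norm_apply_le_of_mulVec_eq_zero {ι κ : Type*} [Fintype ι] [Fintype κ]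
    [DecidableEq ι] [DecidableEq κ] {A : Matrix κ ι ℂ} (hA : Aᴴ * A = 1)
    {c : ℝ} (hc : ∀ k l, ‖A k l‖ ≤ c)
    {Z : Finset κ} {v : ι → ℂ} (hv : ∀ k ∈ Z, (A *ᵥ v) k = 0) (i : ι) :
    ‖v i‖ ≤ #Zᶜ * c ^ 2 * ∑ j, ‖v j‖ := by
  have hrow : ∀ k, ‖(A *ᵥ v) k‖ ≤ c * ∑ j, ‖v j‖ := fun k => by
    rw [mul_sum]
    refine norm_sum_le_of_le _ fun j _ => ?_
    rw [norm_mul]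
    exact mul_le_mul_of_nonneg_right (hc k j) (norm_nonneg _)
  have hinv : v i = ∑ k ∈ Zᶜ, star (A k i) * (A *ᵥ v) k := by
    rw [sum_subset (subset_univ Zᶜ) fun k _ hk => by rw [hv k (by simpa using hk), mul_zero]]
    conv_lhs => rw [← one_mulVec v, ← hA, ← mulVec_mulVec]
    rfl
  calc ‖v i‖ ≤ ∑ k ∈ Zᶜ, c * (c * ∑ j, ‖v j‖) := by
        rw [hinv]
        refine norm_sum_le_of_le _ fun k _ => ?_
        rw [norm_mul, norm_star]
        exact mul_le_mul (hc k i) (hrow k) (norm_nonneg _) ((norm_nonneg _).trans (hc k i))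
    _ = #Zᶜ * c ^ 2 * ∑ j, ‖v j‖ := by rw [sum_const, nsmul_eq_mul]; ring

theorem two_mul_sum_abs_lt_sum_abs {ι : Type*} [Fintype ι] {v : ι → ℝ} (hv : v ≠ 0)
    {μ : ℝ} (hpt : ∀ i, |v i| ≤ μ * ∑ j, |v j|) {S : Finset ι} {s : ℕ} (hS : #S ≤ s)
    (hμ : 2 * s * μ < 1) : 2 * ∑ i ∈ S, |v i| < ∑ j, |v j| := by
  obtain ⟨i₀, hi₀⟩ := Function.ne_iff.1 hv
  have hT : 0 < ∑ j, |v j| :=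
    sum_pos' (fun j _ => abs_nonneg _) ⟨i₀, mem_univ _, abs_pos.2 hi₀⟩
  have hμT : 0 ≤ μ * ∑ j, |v j| := (abs_nonneg _).trans (hpt i₀)
  calc 2 * ∑ i ∈ S, |v i| ≤ 2 * (s * (μ * ∑ j, |v j|)) := by
        gcongr
        refine (sum_le_card_nsmul S _ _ fun i _ => hpt i).trans ?_
        rw [nsmul_eq_mul]
        gcongr
    _ = 2 * s * μ * ∑ j, |v j| := by ring
    _ < ∑ j, |v j| := by nlinarith

theorem l1_lt_of_two_mul_sum_abs_sub_lt {n : ℕ} {x xbar : Fin n → ℝ}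
    (h : 2 * ∑ i ∈ suppF xbar, |x i - xbar i| < ∑ i, |x i - xbar i|) : l1 xbar < l1 x := by
  set S := suppF xbar
  have hoff : ∀ i ∈ Sᶜ, xbar i = 0 := fun i hi => by simpa [S, suppF] using hi
  have hxbar : l1 xbar = ∑ i ∈ S, |xbar i| := by
    rw [l1, ← sum_add_sum_compl S,
      sum_eq_zero (s := Sᶜ) fun i hi => by rw [hoff i hi, abs_zero], add_zero]
  have hon : ∑ i ∈ S, |xbar i| ≤ ∑ i ∈ S, |x i| + ∑ i ∈ S, |x i - xbar i| := by
    rw [← sum_add_distrib]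
    exact sum_le_sum fun i _ => by
      linarith [abs_sub_abs_le_abs_sub (xbar i) (x i), abs_sub_comm (x i) (xbar i)]
  have hcompl : ∑ i ∈ Sᶜ, |x i - xbar i| = ∑ i ∈ Sᶜ, |x i| :=
    sum_congr rfl fun i hi => by rw [hoff i hi, sub_zero]
  rw [← sum_add_sum_compl S] at h
  rw [hxbar, l1, ← sum_add_sum_compl S]
  linarith

theorem stmt19_general (n : ℕ)
    (Ω : Finset (Fin n))
    (s : ℕ)
    (hbound : (s : ℝ) < (n : ℝ) / (2 * ((n - Ω.card : ℕ) : ℝ)))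
    (xbar : Fin n → ℝ) (hsparse : (suppF xbar).card ≤ s) :
    ∀ x : Fin n → ℝ,
      (FdftRows n Ω).mulVec (fun i => (x i : ℂ)) =
        (FdftRows n Ω).mulVec (fun i => (xbar i : ℂ)) →
      x ≠ xbar → l1 xbar < l1 x := by
  intro x hx hne
  set r : ℝ := ((n - Ω.card : ℕ) : ℝ)
  -- `s < n / (2r)` forces `r ≠ 0`, since division by zero gives `0`.
  obtain ⟨hn, hr⟩ : 0 < (n : ℝ) ∧ 0 < 2 * r := by
    rcases div_pos_iff.1 ((Nat.cast_nonneg s).trans_lt hbound) with h | h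
    · exact h
    · exact absurd h.1 (Nat.cast_nonneg n).not_gt
  have hn0 : n ≠ 0 := by exact_mod_cast hn.ne'
  have hμ : 2 * s * (r / n) < 1 := by
    rw [lt_div_iff₀ hr] at hbound
    rw [← mul_div_assoc, div_lt_one hn]
    linarith
  have hpt : ∀ i, |(x - xbar) i| ≤ r / n * ∑ j, |(x - xbar) j| := by
    intro i
    have := norm_apply_le_of_mulVec_eq_zero (Fdft_conjTranspose_mul_self hn0)
      (fun k l => (norm_Fdft_apply hn0 k l).le) (Fdft_mulVec_sub_eq_zero_of_mem hx) i
    simpa [← ofReal_sub, card_compl, r, div_eq_mul_inv, Real.sq_sqrt, hn.le] using this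
  exact l1_lt_of_two_mul_sum_abs_sub_lt
    (two_mul_sum_abs_lt_sum_abs (sub_ne_zero.2 hne) hpt hsparse hμ)

/-- Let `n` be prime and `Ω = {0,…,m̄} ∪ {n-m̄,…,n-1}` with `1 ≤ m̄ ≤ (n-3)/2`,
so `|Ω| = 2m̄+1`.  If `s ≥ 1` and `s < n / (2(n - |Ω|))`, then every `s`-sparse real
vector `xbar ∈ ℝⁿ` is the unique solution of `min ‖x‖₁ s.t. F_Ω x = F_Ω xbar` over real
`x ∈ ℝⁿ`. -/
theorem stmt19 (n : ℕ) (hn : n.Prime) (mbar : ℕ) (hm1 : 1 ≤ mbar)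
    (hm2 : mbar ≤ (n - 3) / 2)
    (Ω : Finset (Fin n))
    (hΩ : Ω = Finset.univ.filter (fun k : Fin n => (k : ℕ) ≤ mbar ∨ n - mbar ≤ (k : ℕ)))
    (s : ℕ) (hs : 1 ≤ s)
    (hbound : (s : ℝ) < (n : ℝ) / (2 * ((n - Ω.card : ℕ) : ℝ)))
    (xbar : Fin n → ℝ) (hsparse : (suppF xbar).card ≤ s) :
    ∀ x : Fin n → ℝ,
      (FdftRows n Ω).mulVec (fun i => (x i : ℂ)) =
        (FdftRows n Ω).mulVec (fun i => (xbar i : ℂ)) →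
      x ≠ xbar → l1 xbar < l1 x :=
  stmt19_general n Ω s hbound xbar hsparse
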